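/- arXiv:2601.17531 — 2 statements merged into one kernel-verified Lean document; each statement's English description precedes it below -/
import Mathlib

section
/- Let L be a Leibniz n-algebra. Then the n-fold tensor power L^{⊗n} is a Leibniz n-algebra with bracket [x_{11}⊗⋯⊗x_{n1}, x_{12}⊗⋯⊗x_{n2}, …, x_{1n}⊗⋯⊗x_{nn}] = Σ_{i=1}^n x_{11}⊗⋯⊗[x_{i1},[x_{12},…,x_{n2}],…,[x_{1n},…,x_{nn}]]⊗⋯⊗x_{n1}. -/
open Function TensorProduct

section Prelude

variable {L : Type*}

/-- The nested (iterated) bracket: `nestBr b k` is the `k*(n-1)+1`-ary operation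
`ω_p(a_1,…,a_p) = b(a_1,…,a_{n-1}, nestBr b (k-1) (a_n,…,a_p))`. -/
def nestBr {n : ℕ} (b : (Fin n → L) → L) : (k : ℕ) → (Fin (k * (n - 1) + 1) → L) → L
  | 0, a => a ⟨0, Nat.succ_pos _⟩
  | k + 1, a =>
    b fun j : Fin n =>
      if h : (j : ℕ) < n - 1 then
        a ⟨(j : ℕ),
          Nat.lt_succ_of_lt (lt_of_lt_of_le h (Nat.le_mul_of_pos_left _ (Nat.succ_pos k)))⟩
      else
        nestBr b k fun i =>
          a ⟨(n - 1) + (i : ℕ), by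
            have h1 : (k + 1) * (n - 1) + 1 = (n - 1) + (k * (n - 1) + 1) := by ring
            rw [h1]
            exact Nat.add_lt_add_left i.isLt _⟩

/-- `f` is a derivation with respect to the `n`-linear operation `b`. -/
def IsNDeriv {n : ℕ} [AddCommMonoid L] (b : (Fin n → L) → L) (f : L → L) : Prop :=
  ∀ a : Fin n → L, f (b a) = ∑ i, b (Function.update a i (f (a i)))

/-- The fundamental identity of Leibniz `n`-algebras:
`[[x_1,…,x_n],y_2,…,y_n] = Σ_i [x_1,…,[x_i,y_2,…,y_n],…,x_n]`
(the entries `y 1, …, y (n-1)` play the role of `y_2,…,y_n`). -/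
def FundId {n : ℕ} [NeZero n] [AddCommMonoid L] (b : (Fin n → L) → L) : Prop :=
  ∀ x y : Fin n → L,
    b (Function.update y 0 (b x)) =
      ∑ i, b (Function.update x i (b (Function.update y 0 (x i))))

/-- The right-nested bracket `[x_1,[x_2,…,[x_m,x_{m+1}]…]]` built from a binary bracket. -/
def nested2 (b : L → L → L) : (m : ℕ) → (Fin (m + 1) → L) → L
  | 0, a => a 0
  | m + 1, a => b (a 0) (nested2 b m fun i => a i.succ)

end Prelude

set_option linter.unusedSectionVars false
set_option maxHeartbeats 1000000 in
section
open PiTensorProduct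
section Construction
variable {K L : Type*} [Field K] [AddCommGroup L] [Module K L]
variable {n : ℕ} [NeZero n]
variable (b : MultilinearMap K (fun _ : Fin n => L) L)

local notation "T" => PiTensorProduct K (fun _ : Fin n => L)

/-- `z ↦ b (update c 0 z)` -/
noncomputable def adc (c : Fin n → L) : L →ₗ[K] L := b.toLinearMap c 0

lemma adc_apply (c : Fin n → L) (z : L) : adc b c z = b (Function.update c 0 z) := rfl

lemma adc_congr {c c' : Fin n → L} (h : ∀ j, j ≠ 0 → c j = c' j) : adc b c = adc b c' := by
  ext z
  simp only [adc_apply]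
  congr 1
  funext j
  rcases eq_or_ne j 0 with rfl | hj
  · simp
  · simp [Function.update_of_ne hj, h j hj]

lemma adc_update_add {c : Fin n → L} {i : Fin n} (hi : i ≠ 0) (u v : L) :
    adc b (Function.update c i (u + v)) =
      adc b (Function.update c i u) + adc b (Function.update c i v) := by
  ext z
  simp only [adc_apply, LinearMap.add_apply]
  rw [Function.update_comm hi, MultilinearMap.map_update_add,
    Function.update_comm hi, Function.update_comm hi]

lemma adc_update_smul {c : Fin n → L} {i : Fin n} (hi : i ≠ 0) (r : K) (u : L) :
    adc b (Function.update c i (r • u)) = r • adc b (Function.update c i u) := by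
  ext z
  simp only [adc_apply, LinearMap.smul_apply]
  rw [Function.update_comm hi, MultilinearMap.map_update_smul,
    Function.update_comm hi]


/-- `id ⊗ ... ⊗ f ⊗ ... ⊗ id` with `f` in slot `k`. -/
noncomputable def Dk (f : L →ₗ[K] L) (k : Fin n) : T →ₗ[K] T :=
  PiTensorProduct.map (Function.update (fun _ => (LinearMap.id : L →ₗ[K] L)) k f)

lemma Dk_tprod (f : L →ₗ[K] L) (k : Fin n) (m : Fin n → L) :
    Dk f k (tprod K m) = tprod K (Function.update m k (f (m k))) := by
  rw [Dk, PiTensorProduct.map_tprod]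
  congr 1
  funext j
  rcases eq_or_ne j k with rfl | hj
  · simp
  · simp [Function.update_of_ne hj]

/-- The derivation-type extension of `f` to the tensor power. -/
noncomputable def del (f : L →ₗ[K] L) : T →ₗ[K] T := ∑ k, Dk f k

lemma del_tprod (f : L →ₗ[K] L) (m : Fin n → L) :
    del f (tprod K m) = ∑ k, tprod K (Function.update m k (f (m k))) := by
  simp [del, LinearMap.sum_apply, Dk_tprod]

lemma Dk_add (f g : L →ₗ[K] L) (k : Fin n) : Dk (f + g) k = Dk f k + Dk g k := by
  apply PiTensorProduct.ext
  apply MultilinearMap.ext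
  intro m
  simp [Dk_tprod, MultilinearMap.map_update_add]

lemma Dk_smul (r : K) (f : L →ₗ[K] L) (k : Fin n) : Dk (r • f) k = r • Dk f k := by
  apply PiTensorProduct.ext
  apply MultilinearMap.ext
  intro m
  simp [Dk_tprod, MultilinearMap.map_update_smul]

lemma del_add (f g : L →ₗ[K] L) : (del (f + g) : T →ₗ[K] T) = del f + del g := by
  simp [del, Dk_add, Finset.sum_add_distrib]

lemma del_smul (r : K) (f : L →ₗ[K] L) : (del (r • f) : T →ₗ[K] T) = r • del f := by
  simp [del, Dk_smul, Finset.smul_sum]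


/-- The bracket on the tensor power, as a raw multilinear map. -/
noncomputable def Braw : MultilinearMap K (fun _ : Fin n => T) T where
  toFun t := del (adc b (fun j => PiTensorProduct.lift b (t j))) (t 0)
  map_update_add' := by
    intro dec t i x y
    have hdec : dec = instDecidableEqFin n := Subsingleton.elim _ _
    subst hdec
    rcases eq_or_ne i 0 with rfl | hi
    · have hA : ∀ w : T, (adc b (fun j => PiTensorProduct.lift b (Function.update t 0 w j))) =
          adc b (fun j => PiTensorProduct.lift b (t j)) := by
        intro w
        apply adc_congr
        intro j hj
        rw [Function.update_of_ne hj]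
      simp only [hA, Function.update_self]
      exact map_add _ x y
    · have h0 : ∀ w : T, Function.update t i w 0 = t 0 := fun w =>
        Function.update_of_ne (Ne.symm hi) _ _
      have hc : ∀ w : T, (fun j => PiTensorProduct.lift b (Function.update t i w j)) =
          Function.update (fun j => PiTensorProduct.lift b (t j)) i (PiTensorProduct.lift b w) := by
        intro w
        funext j
        rcases eq_or_ne j i with rfl | hj
        · simp
        · simp [Function.update_of_ne hj]
      simp only [h0, hc, map_add]
      rw [adc_update_add b hi, del_add, LinearMap.add_apply]
  map_update_smul' := by
    intro dec t i r x
    have hdec : dec = instDecidableEqFin n := Subsingleton.elim _ _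
    subst hdec
    rcases eq_or_ne i 0 with rfl | hi
    · have hA : ∀ w : T, (adc b (fun j => PiTensorProduct.lift b (Function.update t 0 w j))) =
          adc b (fun j => PiTensorProduct.lift b (t j)) := by
        intro w
        apply adc_congr
        intro j hj
        rw [Function.update_of_ne hj]
      simp only [hA, Function.update_self]
      exact map_smul _ r x
    · have h0 : ∀ w : T, Function.update t i w 0 = t 0 := fun w =>
        Function.update_of_ne (Ne.symm hi) _ _
      have hc : ∀ w : T, (fun j => PiTensorProduct.lift b (Function.update t i w j)) =
          Function.update (fun j => PiTensorProduct.lift b (t j)) i (PiTensorProduct.lift b w) := by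
        intro w
        funext j
        rcases eq_or_ne j i with rfl | hj
        · simp
        · simp [Function.update_of_ne hj]
      simp only [h0, hc, map_smul]
      rw [adc_update_smul b hi, del_smul, LinearMap.smul_apply]

lemma Braw_apply (t : Fin n → T) :
    Braw b t = del (adc b (fun j => PiTensorProduct.lift b (t j))) (t 0) := rfl

lemma Braw_tprod (m : Fin n → Fin n → L) :
    Braw b (fun j => tprod K (m j)) =
      ∑ i, tprod K (Function.update (m 0) i (adc b (fun j => b (m j)) (m 0 i))) := by
  rw [Braw_apply]
  simp only [lift.tprod]
  rw [del_tprod]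


/-- A multilinear map on powers of the tensor power is determined by values on pure tensors. -/
lemma mlExt {m : ℕ} {N : Type*} [AddCommGroup N] [Module K N]
    (f g : MultilinearMap K (fun _ : Fin m => T) N)
    (h : ∀ s : Fin m → Fin n → L,
      f (fun j => tprod K (s j)) = g (fun j => tprod K (s j))) : f = g := by
  have key : ∀ k : ℕ, ∀ t : Fin m → T,
      (∀ j : Fin m, k ≤ (j : ℕ) → t j ∈ Set.range (tprod K (s := fun _ : Fin n => L))) →
      f t = g t := by
    intro k
    induction k with
    | zero =>
      intro t ht
      choose s hs using fun j => ht j (Nat.zero_le _)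
      have hts : t = fun j => tprod K (s j) := funext fun j => (hs j).symm
      rw [hts]
      exact h s
    | succ k ih =>
      intro t ht
      by_cases hk : k < m
      · set j₀ : Fin m := ⟨k, hk⟩ with hj₀
        have hF : f.toLinearMap t j₀ = g.toLinearMap t j₀ := by
          apply LinearMap.ext_on (PiTensorProduct.span_tprod_eq_top (R := K) (s := fun _ : Fin n => L))
          rintro z ⟨s, rfl⟩
          simp only [MultilinearMap.toLinearMap_apply]
          apply ih
          intro j hj
          rcases eq_or_ne j j₀ with rfl | hne
          · rw [Function.update_self]
            exact ⟨s, rfl⟩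
          · rw [Function.update_of_ne hne]
            apply ht
            have hjk : (j : ℕ) ≠ k := fun hcon => hne (Fin.ext (by rw [hcon, hj₀]))
            omega
        have := LinearMap.congr_fun hF (t j₀)
        simpa only [MultilinearMap.toLinearMap_apply, Function.update_eq_self] using this
      · apply ih
        intro j hj
        exact absurd (lt_of_lt_of_le j.isLt (not_lt.1 hk)) (not_lt.2 hj)
  apply MultilinearMap.ext
  intro t
  exact key m t (fun j hj => absurd j.isLt (not_lt.2 hj))


lemma tprod_update_sum {α : Type*} (a : Fin n → L) (i : Fin n) (s : Finset α) (v : α → L) :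
    (tprod K (Function.update a i (∑ x ∈ s, v x)) : T) =
      ∑ x ∈ s, tprod K (Function.update a i (v x)) := by
  have := map_sum ((PiTensorProduct.tprod K (s := fun _ : Fin n => L)).toLinearMap a i) v s
  simpa only [MultilinearMap.toLinearMap_apply] using this

lemma b_update_sum {α : Type*} (a : Fin n → L) (i : Fin n) (s : Finset α) (v : α → L) :
    b (Function.update a i (∑ x ∈ s, v x)) = ∑ x ∈ s, b (Function.update a i (v x)) := by
  have := map_sum (b.toLinearMap a i) v s
  simpa only [MultilinearMap.toLinearMap_apply] using this

lemma upd_row (m : Fin n → Fin n → L) (i : Fin n) (u : Fin n → L) :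
    Function.update (fun j => (tprod K (m j) : T)) i (tprod K u) =
      fun j => (tprod K (Function.update m i u j) : T) := by
  funext j
  rcases eq_or_ne j i with rfl | hj
  · simp
  · simp [Function.update_of_ne hj]

lemma b_row (m : Fin n → Fin n → L) (i : Fin n) (u : Fin n → L) :
    (fun j => b (Function.update m i u j)) = Function.update (fun j => b (m j)) i (b u) := by
  funext j
  rcases eq_or_ne j i with rfl | hj
  · simp
  · simp [Function.update_of_ne hj]


lemma pure_identity (f : L →ₗ[K] L)
    (hf : ∀ a : Fin n → L, f (b a) = ∑ i, b (Function.update a i (f (a i))))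
    (m : Fin n → Fin n → L) :
    del f (Braw b (fun j => tprod K (m j))) =
      ∑ i, Braw b (Function.update (fun j => (tprod K (m j) : T)) i (del f (tprod K (m i)))) := by
  classical
  set c : Fin n → L := fun j => b (m j) with hc
  set g : L →ₗ[K] L := adc b c with hg
  have hgg : adc b (fun j => b (m j)) = g := by rw [hg, hc]
  have hci : ∀ i, b (m i) = c i := fun i => by rw [hc]
  -- decomposition of f ∘ g
  have hfg : ∀ z : L, f (g z) =
      g (f z) + ∑ p ∈ Finset.univ.erase (0 : Fin n),
        b (Function.update (Function.update c 0 z) p (f (c p))) := by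
    intro z
    have h1 := hf (Function.update c 0 z)
    rw [← Finset.add_sum_erase _ _ (Finset.mem_univ (0 : Fin n))] at h1
    have h2 : Function.update (Function.update c 0 z) 0
        (f (Function.update c 0 z 0)) = Function.update c 0 (f z) := by
      rw [Function.update_self, Function.update_idem]
    have h3 : ∀ p ∈ Finset.univ.erase (0 : Fin n),
        b (Function.update (Function.update c 0 z) p (f (Function.update c 0 z p))) =
          b (Function.update (Function.update c 0 z) p (f (c p))) := by
      intro p hp
      rw [Function.update_of_ne (Finset.ne_of_mem_erase hp)]
    rw [h2, Finset.sum_congr rfl h3] at h1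
    simpa only [hg, adc_apply] using h1
  -- LHS normal form
  have hL : del f (Braw b (fun j => tprod K (m j))) =
      (∑ i, (tprod K (Function.update (m 0) i (f (g (m 0 i)))) : T)) +
      ∑ i, ∑ k ∈ Finset.univ.erase i,
        (tprod K (Function.update (Function.update (m 0) i (g (m 0 i))) k (f (m 0 k))) : T) := by
    rw [Braw_tprod, map_sum]
    simp only [hgg]
    have e1 : ∀ i : Fin n,
        del f (tprod K (Function.update (m 0) i (g (m 0 i)))) =
          (tprod K (Function.update (m 0) i (f (g (m 0 i)))) : T) +
          ∑ k ∈ Finset.univ.erase i,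
            tprod K (Function.update (Function.update (m 0) i (g (m 0 i))) k (f (m 0 k))) := by
      intro i
      rw [del_tprod, ← Finset.add_sum_erase _ _ (Finset.mem_univ i)]
      congr 1
      · rw [Function.update_self, Function.update_idem]
      · apply Finset.sum_congr rfl
        intro k hk
        rw [Function.update_of_ne (Finset.ne_of_mem_erase hk)]
    rw [Finset.sum_congr rfl (fun i _ => e1 i), Finset.sum_add_distrib]
  -- RHS: expand the inner `del`
  have hR : ∀ i : Fin n,
      Braw b (Function.update (fun j => (tprod K (m j) : T)) i (del f (tprod K (m i)))) =
        ∑ k, Braw b (Function.update (fun j => (tprod K (m j) : T)) i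
          (tprod K (Function.update (m i) k (f (m i k))))) := by
    intro i
    rw [del_tprod]
    have := map_sum ((Braw b).toLinearMap (fun j => (tprod K (m j) : T)) i)
      (fun k => (tprod K (Function.update (m i) k (f (m i k))) : T)) Finset.univ
    simpa only [MultilinearMap.toLinearMap_apply] using this
  have hterm : ∀ i k : Fin n,
      Braw b (Function.update (fun j => (tprod K (m j) : T)) i
        (tprod K (Function.update (m i) k (f (m i k))))) =
      ∑ p, (tprod K (Function.update
          (Function.update m i (Function.update (m i) k (f (m i k))) 0) p
          (adc b (fun j => b (Function.update m i (Function.update (m i) k (f (m i k))) j))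
            (Function.update m i (Function.update (m i) k (f (m i k))) 0 p))) : T) := by
    intro i k
    rw [upd_row, Braw_tprod]
  -- the i ≠ 0 part of the RHS
  have hne : ∀ i : Fin n, i ≠ 0 →
      (∑ k, Braw b (Function.update (fun j => (tprod K (m j) : T)) i
        (tprod K (Function.update (m i) k (f (m i k)))))) =
      ∑ p, (tprod K (Function.update (m 0) p
        (b (Function.update (Function.update c 0 (m 0 p)) i (f (c i))))) : T) := by
    intro i hi
    have step : ∀ k : Fin n,
        Braw b (Function.update (fun j => (tprod K (m j) : T)) i
          (tprod K (Function.update (m i) k (f (m i k))))) =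
        ∑ p, (tprod K (Function.update (m 0) p
          (b (Function.update (Function.update c 0 (m 0 p)) i
            (b (Function.update (m i) k (f (m i k))))))) : T) := by
      intro k
      rw [hterm i k]
      apply Finset.sum_congr rfl
      intro p _
      have h0 : Function.update m i (Function.update (m i) k (f (m i k))) 0 = m 0 :=
        Function.update_of_ne (Ne.symm hi) _ _
      rw [h0, b_row, adc_apply, Function.update_comm hi]
    rw [Finset.sum_congr rfl (fun k _ => step k), Finset.sum_comm]
    apply Finset.sum_congr rfl
    intro p _
    rw [← tprod_update_sum, ← b_update_sum, ← hf (m i), hci i]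
  -- the i = 0 part of the RHS
  have hzero :
      (∑ k, Braw b (Function.update (fun j => (tprod K (m j) : T)) 0
        (tprod K (Function.update (m 0) k (f (m 0 k)))))) =
      (∑ k, (tprod K (Function.update (m 0) k (g (f (m 0 k)))) : T)) +
      ∑ k, ∑ p ∈ Finset.univ.erase k,
        (tprod K (Function.update (Function.update (m 0) k (f (m 0 k))) p (g (m 0 p))) : T) := by
    have step : ∀ k : Fin n,
        Braw b (Function.update (fun j => (tprod K (m j) : T)) 0
          (tprod K (Function.update (m 0) k (f (m 0 k))))) =
        (tprod K (Function.update (m 0) k (g (f (m 0 k)))) : T) +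
        ∑ p ∈ Finset.univ.erase k,
          (tprod K (Function.update (Function.update (m 0) k (f (m 0 k))) p (g (m 0 p))) : T) := by
      intro k
      rw [hterm 0 k]
      have hadc : adc b (fun j => b (Function.update m 0
          (Function.update (m 0) k (f (m 0 k))) j)) = g := by
        rw [hg]
        apply adc_congr
        intro j hj
        rw [Function.update_of_ne hj, hc]
      simp only [Function.update_self, hadc]
      rw [← Finset.add_sum_erase _ _ (Finset.mem_univ k)]
      congr 1
      · rw [Function.update_self, Function.update_idem]
      · apply Finset.sum_congr rfl
        intro p hp
        rw [Function.update_of_ne (Finset.ne_of_mem_erase hp)]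
    rw [Finset.sum_congr rfl (fun k _ => step k), Finset.sum_add_distrib]
  -- assemble: normal form for the RHS
  have hRHS : (∑ i, Braw b (Function.update (fun j => (tprod K (m j) : T)) i
        (del f (tprod K (m i))))) =
      ((∑ k, (tprod K (Function.update (m 0) k (g (f (m 0 k)))) : T)) +
      ∑ k, ∑ p ∈ Finset.univ.erase k,
        (tprod K (Function.update (Function.update (m 0) k (f (m 0 k))) p (g (m 0 p))) : T)) +
      ∑ i ∈ Finset.univ.erase (0 : Fin n), ∑ p,
        (tprod K (Function.update (m 0) p
          (b (Function.update (Function.update c 0 (m 0 p)) i (f (c i))))) : T) := by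
    rw [Finset.sum_congr rfl (fun i _ => hR i),
      ← Finset.add_sum_erase _ _ (Finset.mem_univ (0 : Fin n)), hzero,
      Finset.sum_congr rfl (fun i hi => hne i (Finset.ne_of_mem_erase hi))]
  rw [hL, hRHS]
  -- decompose the f∘g sum
  have hE1 : (∑ i, (tprod K (Function.update (m 0) i (f (g (m 0 i)))) : T)) =
      (∑ i, (tprod K (Function.update (m 0) i (g (f (m 0 i)))) : T)) +
      ∑ i, ∑ p ∈ Finset.univ.erase (0 : Fin n),
        (tprod K (Function.update (m 0) i
          (b (Function.update (Function.update c 0 (m 0 i)) p (f (c p))))) : T) := by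
    rw [← Finset.sum_add_distrib]
    apply Finset.sum_congr rfl
    intro i _
    rw [hfg (m 0 i), MultilinearMap.map_update_add, tprod_update_sum]
  rw [hE1]
  -- swap the double sum E2
  have hswap : (∑ i : Fin n, ∑ p ∈ Finset.univ.erase (0 : Fin n),
        (tprod K (Function.update (m 0) i
          (b (Function.update (Function.update c 0 (m 0 i)) p (f (c p))))) : T)) =
      ∑ p ∈ Finset.univ.erase (0 : Fin n), ∑ i : Fin n,
        (tprod K (Function.update (m 0) i
          (b (Function.update (Function.update c 0 (m 0 i)) p (f (c p))))) : T) :=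
    Finset.sum_comm
  -- identify the two "mixed" double sums
  have hE3 : (∑ k : Fin n, ∑ p ∈ Finset.univ.erase k,
        (tprod K (Function.update (Function.update (m 0) k (f (m 0 k))) p (g (m 0 p))) : T)) =
      ∑ i : Fin n, ∑ k ∈ Finset.univ.erase i,
        (tprod K (Function.update (Function.update (m 0) i (g (m 0 i))) k (f (m 0 k))) : T) := by
    have h1 : ∀ k : Fin n, ∀ p ∈ Finset.univ.erase k,
        (tprod K (Function.update (Function.update (m 0) k (f (m 0 k))) p (g (m 0 p))) : T) =
        tprod K (Function.update (Function.update (m 0) p (g (m 0 p))) k (f (m 0 k))) := by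
      intro k p hp
      rw [Function.update_comm (Ne.symm (Finset.ne_of_mem_erase hp))]
    rw [Finset.sum_congr rfl (fun k _ => Finset.sum_congr rfl (h1 k))]
    exact Finset.sum_comm' (fun x y => by
      simp [Finset.mem_erase, and_comm, ne_comm, eq_comm])
  rw [hE3, hswap]
  abel


lemma del_deriv (f : L →ₗ[K] L)
    (hf : ∀ a : Fin n → L, f (b a) = ∑ i, b (Function.update a i (f (a i))))
    (t : Fin n → T) :
    del f (Braw b t) = ∑ i, Braw b (Function.update t i (del f (t i))) := by
  have upd_eq : ∀ (t : Fin n → T) (i : Fin n),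
      (fun j => (Function.update (fun _ => (LinearMap.id : T →ₗ[K] T)) i (del f)) j (t j)) =
        Function.update t i (del f (t i)) := by
    intro t i
    funext j
    rcases eq_or_ne j i with rfl | hj
    · simp
    · simp [Function.update_of_ne hj]
  have h : ((del f).compMultilinearMap (Braw b)) =
      ∑ i, (Braw b).compLinearMap
        (Function.update (fun _ => (LinearMap.id : T →ₗ[K] T)) i (del f)) := by
    apply mlExt
    intro s
    simp only [LinearMap.compMultilinearMap_apply, MultilinearMap.sum_apply,
      MultilinearMap.compLinearMap_apply]
    rw [pure_identity b f hf s]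
    apply Finset.sum_congr rfl
    intro i _
    rw [upd_eq (fun j => tprod K (s j)) i]
  have h2 := MultilinearMap.congr_fun h t
  simp only [LinearMap.compMultilinearMap_apply, MultilinearMap.sum_apply,
    MultilinearMap.compLinearMap_apply] at h2
  rw [h2]
  apply Finset.sum_congr rfl
  intro i _
  rw [upd_eq t i]

lemma Braw_fundId (hb : FundId ⇑b) : FundId ⇑(Braw b) := by
  intro x y
  have key : ∀ w : T, Braw b (Function.update y 0 w) =
      del (adc b (fun j => PiTensorProduct.lift b (y j))) w := by
    intro w
    rw [Braw_apply]
    have h0 : Function.update y 0 w 0 = w := Function.update_self _ _ _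
    have hadc : adc b (fun j => PiTensorProduct.lift b (Function.update y 0 w j)) =
        adc b (fun j => PiTensorProduct.lift b (y j)) :=
      adc_congr b fun j hj => by rw [Function.update_of_ne hj]
    rw [h0, hadc]
  have hder : ∀ a : Fin n → L,
      (adc b (fun j => PiTensorProduct.lift b (y j))) (b a) =
        ∑ i, b (Function.update a i
          ((adc b (fun j => PiTensorProduct.lift b (y j))) (a i))) := by
    intro a
    simpa only [adc_apply] using hb a (fun j => PiTensorProduct.lift b (y j))
  calc Braw b (Function.update y 0 (Braw b x))
      = del (adc b (fun j => PiTensorProduct.lift b (y j))) (Braw b x) := key _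
    _ = ∑ i, Braw b (Function.update x i
          (del (adc b (fun j => PiTensorProduct.lift b (y j))) (x i))) :=
        del_deriv b _ hder x
    _ = ∑ i, Braw b (Function.update x i (Braw b (Function.update y 0 (x i)))) := by
        apply Finset.sum_congr rfl
        intro i _
        rw [key (x i)]

end Construction

end

/-- if `L` is a Leibniz `n`-algebra, then `L^{⊗n}` is a Leibniz `n`-algebra
with bracket `[x_{·1},…,x_{·n}] = Σ_i x_{11}⊗⋯⊗[x_{i1},[x_{12},…,x_{n2}],…,[x_{1n},…,x_{nn}]]⊗⋯⊗x_{n1}`. -/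
theorem tensor_power_leibniz_n {K L : Type*} [Field K] [AddCommGroup L] [Module K L]
    (n : ℕ) [NeZero n] (hn : 2 ≤ n)
    (b : MultilinearMap K (fun _ : Fin n => L) L) (hb : FundId ⇑b) :
    ∃ B : MultilinearMap K (fun _ : Fin n => PiTensorProduct K (fun _ : Fin n => L))
        (PiTensorProduct K (fun _ : Fin n => L)),
      (∀ x : Fin n → Fin n → L,
        B (fun j => PiTensorProduct.tprod K (x j)) =
          ∑ i : Fin n,
            PiTensorProduct.tprod K (Function.update (x 0) i
              (b (Function.update (fun j => b (x j)) 0 (x 0 i))))) ∧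
      FundId ⇑B := by
  refine ⟨Braw b, ?_, Braw_fundId b hb⟩
  intro x
  rw [Braw_tprod]
  exact Finset.sum_congr rfl fun i _ => rfl
end

section
/- Let L be a perfect Leibniz n-algebra with universal central extension 0 → nHL_1(L) → L^{∗n} → L → 0, and view L as a perfect Leibniz p-algebra via U_n^p (p = k(n-1)+1) with universal central extension 0 → pHL_1(L) → L^{∗p} → L → 0. Then the unique morphism of central extensions φ : L^{∗p} → L^{∗n} over L, given by φ(x_1∗⋯∗x_p) = x_1∗⋯∗x_{n-1}∗[x_n,…,x_{2n-2},[…,[x_{p-n+1},…,x_p]…]], is surjective. -/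
open Function TensorProduct

/-- let `L` be a perfect Leibniz `n`-algebra, `πn : Tn → L` its universal
central extension in `nLb` (so `Tn` is perfect), viewed via `U_n^p` as a central extension
of Leibniz `p`-algebras (`p = k*(n-1)+1`), and `πp : Tp → L` the universal central
extension of `U_n^p(L)` in `pLb`. Then the unique morphism of central extensions
`φ : Tp → Tn` over `L` is surjective. -/
theorem uce_comparison_surjective {R L Tn Tp : Type*} [Field R]
    [AddCommGroup L] [Module R L] [AddCommGroup Tn] [Module R Tn]
    [AddCommGroup Tp] [Module R Tp]
    (n k : ℕ) [NeZero n] (hn : 2 ≤ n) (hk : 1 ≤ k)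
    (bL : MultilinearMap R (fun _ : Fin n => L) L) (hbL : FundId ⇑bL)
    (hLperf : Submodule.span R (Set.range fun a : Fin n → L => bL a) = ⊤)
    (bn : MultilinearMap R (fun _ : Fin n => Tn) Tn) (hbn : FundId ⇑bn)
    (bp : MultilinearMap R (fun _ : Fin (k * (n - 1) + 1) => Tp) Tp) (hbp : FundId ⇑bp)
    (πn : Tn →ₗ[R] L) (πp : Tp →ₗ[R] L)
    -- πn is a homomorphism of Leibniz n-algebras, πp one of Leibniz p-algebras
    (hπn : ∀ a : Fin n → Tn, πn (bn a) = bL fun i => πn (a i))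
    (hπp : ∀ a : Fin (k * (n - 1) + 1) → Tp,
      πp (bp a) = nestBr (⇑bL) k fun i => πp (a i))
    (hsn : Function.Surjective πn) (hsp : Function.Surjective πp)
    -- both extensions are central
    (hcn : ∀ z : Tn, πn z = 0 →
      ∀ (a : Fin n → Tn) (j : Fin n), bn (Function.update a j z) = 0)
    (hcp : ∀ z : Tp, πp z = 0 →
      ∀ (a : Fin (k * (n - 1) + 1) → Tp) (j : Fin (k * (n - 1) + 1)),
        bp (Function.update a j z) = 0)
    -- Tn = L^{∗n} is perfect
    (hTnperf : Submodule.span R (Set.range fun a : Fin n → Tn => bn a) = ⊤)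
    -- πp : Tp = L^{∗p} → L is the universal central extension in pLb
    (huniv : ∀ (T' : Type) (_ : AddCommGroup T') (_ : Module R T')
        (b' : MultilinearMap R (fun _ : Fin (k * (n - 1) + 1) => T') T')
        (π' : T' →ₗ[R] L),
        FundId ⇑b' →
        (∀ a : Fin (k * (n - 1) + 1) → T',
          π' (b' a) = nestBr (⇑bL) k fun i => π' (a i)) →
        Function.Surjective π' →
        (∀ z : T', π' z = 0 →
          ∀ (a : Fin (k * (n - 1) + 1) → T') (j : Fin (k * (n - 1) + 1)),
            b' (Function.update a j z) = 0) →
        ∃! h : Tp →ₗ[R] T',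
          (∀ a : Fin (k * (n - 1) + 1) → Tp,
            h (bp a) = b' fun i => h (a i)) ∧ π' ∘ₗ h = πp)
    -- φ is the morphism of central extensions over L in pLb
    (φ : Tp →ₗ[R] Tn)
    (hφ : ∀ a : Fin (k * (n - 1) + 1) → Tp,
      φ (bp a) = nestBr (⇑bn) k fun i => φ (a i))
    (hcomm : πn ∘ₗ φ = πp) :
    Function.Surjective φ := by
  classical
  have hn1 : 1 ≤ n - 1 := by omega
  have hnn : n - 1 < n := by omega
  -- πn ∘ φ = πp pointwise
  have hπφ : ∀ x : Tp, πn (φ x) = πp x := fun x => LinearMap.congr_fun hcomm x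
  -- congruence of bn modulo ker πn, via centrality
  have hmod : ∀ a a' : Fin n → Tn, (∀ i, πn (a i) = πn (a' i)) → bn a = bn a' := by
    intro a a' h
    have key : ∀ s : Finset (Fin n),
        bn (fun i => if i ∈ s then a' i else a i) = bn a := by
      intro s
      induction s using Finset.induction_on with
      | empty => simp
      | @insert i s hi ih =>
        have hfun : (fun j => if j ∈ insert i s then a' j else a j)
            = Function.update (fun j => if j ∈ s then a' j else a j) i (a' i) := by
          funext j
          by_cases hj : j = i
          · subst hj; simp [hi]
          · simp [Function.update, hj, Finset.mem_insert]
        rw [hfun]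
        have hz : bn (Function.update (fun j => if j ∈ s then a' j else a j) i
            (a' i - a i)) = 0 := by
          refine hcn _ ?_ _ _
          rw [map_sub, h i, sub_self]
        have hsub := bn.map_update_sub (fun j => if j ∈ s then a' j else a j) i
          (a' i) (a i)
        have heq := sub_eq_zero.mp (hsub.symm.trans hz)
        rw [heq]
        have : Function.update (fun j => if j ∈ s then a' j else a j) i (a i)
            = fun j => if j ∈ s then a' j else a j := by
          funext j
          by_cases hj : j = i
          · subst hj; simp [Function.update, hi]
          · simp [Function.update, hj]
        rw [this, ih]
    have := key Finset.univ
    simpa using this.symm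
  -- the submodules of nested brackets of elements of range φ
  let N : ℕ → Submodule R Tn := fun j =>
    Submodule.span R (Set.range fun y : Fin (j * (n - 1) + 1) → Tp =>
      nestBr (⇑bn) j fun i => φ (y i))
  -- main claim: N (m+1) = ⊤ for all m
  have hmain : ∀ m : ℕ, (⊤ : Submodule R Tn) ≤ N (m + 1) := by
    intro m
    induction m with
    | zero =>
      rw [← hTnperf, Submodule.span_le]
      rintro _ ⟨a, rfl⟩
      show bn a ∈ (N (0 + 1) : Submodule R Tn)
      choose x hx using fun i => hsp (πn (a i))
      have h1 : bn a = bn fun i => φ (x i) := by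
        refine hmod _ _ fun i => ?_
        rw [hπφ, hx]
      have h2 : (nestBr (⇑bn) 1 fun i : Fin (1 * (n - 1) + 1) =>
          φ (x ⟨i.val, by have := i.isLt; omega⟩)) = bn fun i => φ (x i) := by
        show bn _ = bn _
        congr 1
        funext j
        by_cases hj : (j : ℕ) < n - 1
        · rw [dif_pos hj]
        · rw [dif_neg hj]
          have hje : (⟨n - 1 + 0, by omega⟩ : Fin n) = j := by
            refine Fin.ext ?_
            show n - 1 + 0 = (j : ℕ)
            have := j.isLt
            omega
          show φ (x ⟨n - 1 + 0, by omega⟩) = φ (x j)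
          rw [hje]
      rw [h1, ← h2]
      exact Submodule.subset_span ⟨_, rfl⟩
    | succ m ih =>
      rw [← hTnperf, Submodule.span_le]
      rintro _ ⟨a, rfl⟩
      show bn a ∈ (N (m + 1 + 1) : Submodule R Tn)
      choose x hx using fun i => hsp (πn (a i))
      have h1 : bn a = bn fun i => if (i : ℕ) < n - 1 then φ (x i) else a i := by
        refine hmod _ _ fun i => ?_
        split
        · rw [hπφ, hx]
        · rfl
      have hclaim : ∀ t ∈ N (m + 1),
          bn (Function.update (fun i => if (i : ℕ) < n - 1 then φ (x i) else a i)
            ⟨n - 1, hnn⟩ t) ∈ N (m + 2) := by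
        intro t ht
        induction ht using Submodule.span_induction with
        | mem t ht =>
          obtain ⟨y, rfl⟩ := ht
          have heq : (nestBr (⇑bn) (m + 2) fun i : Fin ((m + 2) * (n - 1) + 1) =>
              φ (if h : (i : ℕ) < n - 1 then x ⟨i.val, by omega⟩
                 else y ⟨i.val - (n - 1), by
                   have := i.isLt
                   have h1 : (m + 2) * (n - 1) = (n - 1) + (m + 1) * (n - 1) := by ring
                   omega⟩)) =
              bn (Function.update (fun i => if (i : ℕ) < n - 1 then φ (x i) else a i)
                ⟨n - 1, hnn⟩ (nestBr (⇑bn) (m + 1) fun i => φ (y i))) := by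
            show bn _ = bn _
            congr 1
            funext j
            by_cases hj : (j : ℕ) < n - 1
            · have hjne : j ≠ ⟨n - 1, hnn⟩ := by
                refine Fin.ne_of_val_ne ?_
                show (j : ℕ) ≠ n - 1
                omega
              rw [dif_pos hj, Function.update_of_ne hjne]
              simp only [if_pos hj]
              rw [dif_pos hj]
            · have hjeq : j = ⟨n - 1, hnn⟩ := by
                refine Fin.ext ?_
                show (j : ℕ) = n - 1
                have := j.isLt
                omega
              rw [dif_neg hj, hjeq, Function.update_self]
              congr 1
              funext i
              have hlt : ¬ ((⟨n - 1 + (i : ℕ), by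
                  have := i.isLt
                  have h1 : (m + 2) * (n - 1) + 1 = (n - 1) + ((m + 1) * (n - 1) + 1) := by
                    ring
                  omega⟩ : Fin ((m + 2) * (n - 1) + 1)) : ℕ) < n - 1 := by
                show ¬ n - 1 + (i : ℕ) < n - 1
                omega
              simp only [dif_neg hlt]
              refine congrArg (fun z => φ (y z)) (Fin.ext ?_)
              show n - 1 + (i : ℕ) - (n - 1) = (i : ℕ)
              omega
          rw [← heq]
          exact Submodule.subset_span ⟨_, rfl⟩
        | zero =>
          rw [bn.map_update_zero]
          exact Submodule.zero_mem _
        | add u v hu hv hpu hpv =>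
          rw [bn.map_update_add]
          exact Submodule.add_mem _ hpu hpv
        | smul c u hu hpu =>
          rw [bn.map_update_smul]
          exact Submodule.smul_mem _ _ hpu
      have h2 : Function.update (fun i : Fin n => if (i : ℕ) < n - 1 then φ (x i) else a i)
          ⟨n - 1, hnn⟩ (a ⟨n - 1, hnn⟩)
          = fun i : Fin n => if (i : ℕ) < n - 1 then φ (x i) else a i := by
        funext j
        by_cases hj : j = (⟨n - 1, hnn⟩ : Fin n)
        · subst hj
          rw [Function.update_self]
          exact (if_neg (lt_irrefl (n - 1))).symm
        · rw [Function.update_of_ne hj]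
      have := hclaim (a ⟨n - 1, hnn⟩) (ih trivial)
      rw [h2, ← h1] at this
      exact this
  -- conclude: N k ≤ range φ
  obtain ⟨k', rfl⟩ : ∃ k', k = k' + 1 := ⟨k - 1, by omega⟩
  have hNk : N (k' + 1) ≤ LinearMap.range φ := by
    rw [Submodule.span_le]
    rintro _ ⟨y, rfl⟩
    exact ⟨bp y, hφ y⟩
  rw [← LinearMap.range_eq_top]
  exact top_le_iff.mp (le_trans (hmain k') hNk)
end
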